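/- Let K be a field of characteristic 0 and let P ∈ K[y] be a separable polynomial of degree d whose Galois group over K is the full symmetric group S_d, and whose roots α_1, …, α_d (in a splitting field) are algebraically independent over ℚ. Then for every integer c with 1 ≤ c ≤ d, the polynomial Σ_c P = Π_{i_1 < ⋯ < i_c} (y − (α_{i_1} + ⋯ + α_{i_c})), which has coefficients in K and degree C(d,c), is irreducible in K[y]. -/

import Mathlib

/-!
Write `β s = ∑ i ∈ s, α i`. Algebraic independence makes `s ↦ β s` injective. Every
automorphism of `L/K` permutes the roots `α i`, so it sends `β s` to `β (σ • s)` with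
`#(σ • s) = #s`; conversely every permutation is realised, and permutations act transitively
on the `c`-subsets. Hence the Galois orbit of `β s₀` (with `#s₀ = c`) consists of the
`C(d, c)` distinct sums `β s` with `#s = c`. In a Galois extension the minimal polynomial of an
element is the product of `X - y` over its orbit, so `Σ_c P` is the image of the irreducible
polynomial `minpoly K (β s₀)`.
-/

open Polynomial Function Equiv
open scoped Pointwise

theorem LinearIndependent.injective_finsetSum {ι R M : Type*} [Fintype ι] [Semiring R]
    [Nontrivial R] [AddCommMonoid M] [Module R M] {v : ι → M} (hv : LinearIndependent R v) :
    Injective fun s : Finset ι => ∑ i ∈ s, v i := by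
  classical
  intro s t hst
  have hcoeff := Fintype.linearIndependent_iffₛ.mp hv (fun i => if i ∈ s then 1 else 0)
    (fun i => if i ∈ t then 1 else 0) (by simpa [ite_smul, Finset.sum_ite_mem] using hst)
  ext i
  have := hcoeff i
  split_ifs at this <;> simp_all

theorem Finset.exists_perm_smul_eq {ι : Type*} [DecidableEq ι] {s t : Finset ι}
    (h : s.card = t.card) : ∃ σ : Perm ι, σ • s = t := by
  have := Set.powersetCard.isPretransitive (α := ι) (n := s.card)
  obtain ⟨σ, hσ⟩ := MulAction.exists_smul_eq (Perm ι)
    (⟨s, rfl⟩ : Set.powersetCard ι s.card) ⟨t, h.symm⟩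
  exact ⟨σ, congrArg Subtype.val hσ⟩

theorem map_finsetSum_eq_sum_smul {ι M F : Type*} [DecidableEq ι] [AddCommMonoid M]
    [FunLike F M M] [AddMonoidHomClass F M M] (f : F) {v : ι → M} {σ : Perm ι}
    (h : ∀ i, f (v i) = v (σ i)) (s : Finset ι) :
    f (∑ i ∈ s, v i) = ∑ i ∈ σ • s, v i := by
  simp only [map_sum, h, Finset.smul_finset_def, Perm.smul_def]
  exact (Finset.sum_image fun i _ j _ hij => σ.injective hij).symm

theorem Equiv.Perm.exists_comp_eq_of_forall_exists {ι M : Type*} [Finite ι] {v : ι → M}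
    (hv : Injective v) {f : M → M} (hf : Injective f) (h : ∀ i, ∃ j, f (v i) = v j) :
    ∃ σ : Perm ι, ∀ i, f (v i) = v (σ i) := by
  choose τ hτ using h
  have hτinj : Injective τ := fun i j hij => hv (hf (by rw [hτ, hτ, hij]))
  exact ⟨Equiv.ofBijective τ hτinj.bijective_of_finite, hτ⟩

theorem Polynomial.aeval_eq_zero_iff_of_map_eq_C_mul_prod {K L ι : Type*} [CommRing K]
    [CommRing L] [IsDomain L] [Algebra K L] [Fintype ι] {P : K[X]} {a : L} (ha : a ≠ 0)
    {α : ι → L} (h : P.map (algebraMap K L) = C a * ∏ i, (X - C (α i))) (y : L) :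
    aeval y P = 0 ↔ ∃ i, y = α i := by
  rw [aeval_def, ← eval_map, h, eval_mul, eval_C, eval_prod, mul_eq_zero,
    Finset.prod_eq_zero_iff]
  simp [ha, sub_eq_zero]

theorem Polynomial.exists_perm_of_map_eq_C_mul_prod {K L ι : Type*} [CommRing K]
    [CommRing L] [IsDomain L] [Algebra K L] [Fintype ι] {P : K[X]} {a : L} (ha : a ≠ 0)
    {α : ι → L} (hα : Injective α) (h : P.map (algebraMap K L) = C a * ∏ i, (X - C (α i)))
    (g : L ≃ₐ[K] L) : ∃ σ : Perm ι, ∀ i, g (α i) = α (σ i) := by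
  have hroot := aeval_eq_zero_iff_of_map_eq_C_mul_prod ha h
  refine Perm.exists_comp_eq_of_forall_exists hα g.injective fun i => (hroot _).mp ?_
  rw [aeval_algHom_apply, (hroot _).mpr ⟨i, rfl⟩, map_zero]

theorem minpoly.map_eq_prod_of_mem_iff {K L : Type*} [Field K] [Field L] [Algebra K L]
    [FiniteDimensional K L] [IsGalois K L] {x : L} {S : Finset L}
    (hS : ∀ y, y ∈ S ↔ ∃ g : L ≃ₐ[K] L, g x = y) :
    (minpoly K x).map (algebraMap K L) = ∏ y ∈ S, (X - C y) := by
  classical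
  have hx : IsIntegral K x := .of_finite K x
  have hroots : ((minpoly K x).map (algebraMap K L)).roots.toFinset = S := by
    ext y
    rw [Multiset.mem_toFinset, mem_roots_map_of_injective (algebraMap K L).injective
      (minpoly.ne_zero hx), ← aeval_def, hS]
    constructor
    · exact minpoly.exists_algEquiv_of_root' hx.isAlgebraic
    · rintro ⟨g, rfl⟩
      rw [aeval_algHom_apply, minpoly.aeval, map_zero]
  have hnodup :=
    nodup_roots (Separable.map (f := algebraMap K L) (Algebra.IsSeparable.isSeparable K x))
  rw [(Normal.splits inferInstance x).eq_prod_roots_of_monic ((minpoly.monic hx).map _),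
    ← hroots, Finset.prod_eq_multiset_prod, Multiset.toFinset_val, hnodup.dedup]

theorem sigma_c_irreducible (K L : Type*) [Field K]
    [Field L] [CharZero L] [Algebra K L]
    (P : Polynomial K) (d : ℕ)
    (hsep : P.Separable)
    (hsplit : IsSplittingField K L P)
    (α : Fin d → L)
    (hroots : P.map (algebraMap K L) =
      C (algebraMap K L P.leadingCoeff) * ∏ i : Fin d, (X - C (α i)))
    (hgal : ∀ σ : Equiv.Perm (Fin d), ∃ g : L ≃ₐ[K] L, ∀ i, g (α i) = α (σ i))
    (hind : AlgebraicIndependent ℚ α)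
    (c : ℕ) (hcd : c ≤ d) :
    ∃ Q : Polynomial K,
      Q.map (algebraMap K L) =
        ∏ s ∈ Finset.powersetCard c (Finset.univ : Finset (Fin d)),
          (X - C (∑ i ∈ s, α i)) ∧
      Q.natDegree = Nat.choose d c ∧
      Irreducible Q := by
  classical
  have := hsplit
  have : FiniteDimensional K L := IsSplittingField.finiteDimensional L P
  have : IsGalois K L := IsGalois.of_separable_splitting_field hsep
  set 𝒮 := Finset.powersetCard c (Finset.univ : Finset (Fin d))
  set β : Finset (Fin d) → L := fun s => ∑ i ∈ s, α i
  have hβ : Injective β := hind.linearIndependent.injective_finsetSum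
  have hperm (g : L ≃ₐ[K] L) : ∃ σ : Perm (Fin d), ∀ i, g (α i) = α (σ i) :=
    exists_perm_of_map_eq_C_mul_prod (by simpa using hsep.ne_zero) hind.injective hroots g
  obtain ⟨s₀, hs₀⟩ : 𝒮.Nonempty := Finset.powersetCard_nonempty.mpr (by simpa using hcd)
  have hconj (y : L) : y ∈ 𝒮.image β ↔ ∃ g : L ≃ₐ[K] L, g (β s₀) = y := by
    simp only [Finset.mem_image, 𝒮, Finset.mem_powersetCard_univ] at hs₀ ⊢
    constructor
    · rintro ⟨t, ht, rfl⟩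
      obtain ⟨σ, rfl⟩ := Finset.exists_perm_smul_eq (hs₀.trans ht.symm)
      obtain ⟨g, hg⟩ := hgal σ
      exact ⟨g, map_finsetSum_eq_sum_smul g hg s₀⟩
    · rintro ⟨g, rfl⟩
      obtain ⟨σ, hσ⟩ := hperm g
      exact ⟨σ • s₀, by rw [Finset.card_smul_finset, hs₀],
        (map_finsetSum_eq_sum_smul g hσ s₀).symm⟩
  have hmap : (minpoly K (β s₀)).map (algebraMap K L) = ∏ s ∈ 𝒮, (X - C (β s)) := by
    rw [minpoly.map_eq_prod_of_mem_iff hconj, Finset.prod_image hβ.injOn]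
  refine ⟨minpoly K (β s₀), hmap, ?_, minpoly.irreducible (.of_finite K _)⟩
  rw [← natDegree_map (algebraMap K L), hmap, natDegree_finsetProd_X_sub_C_eq_card,
    Finset.card_powersetCard, Finset.card_univ, Fintype.card_fin]
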